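/- Let (Ω, P) be a probability space, N ≥ 2, u† : Fin N → ℝ with Σᵢ u†(i) = 0, and σ ≥ 0. For each ordered pair (a,b) with a ≠ b let ε_{a,b} : Ω → ℝ be a square-integrable random variable with E[ε_{a,b}] = 0 and Var[ε_{a,b}] = σ², and assume Cov[ε_{a,b}, ε_{c,d}] = 0 for any two distinct ordered pairs (a,b) ≠ (c,d). Define ρ_{a,b}(ω) = u†(a) − u†(b) + ε_{a,b}(ω) and U(a)(ω) = (1/N)·Σ_{b ≠ a} ρ_{a,b}(ω). Then for all i ≠ j and every δ > 0, P({ω : |U(i)(ω) − U(j)(ω) − (u†(i) − u†(j))| ≥ δ}) ≤ 2·(N−1)·σ²/(N²·δ²); in particular this bound is at most 2σ²/(N·δ²), so the potential method is a consistent estimator of the preference function as N grows. -/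

import Mathlib

open Finset MeasureTheory ProbabilityTheory

/-!
Averaging `ρ a b = u a - u b + ε a b` over `b ≠ a` gives `U a = u a - (∑ u) / N + N⁻¹ A a`, where
`A a = ∑_{b ≠ a} ε a b`; the common term `(∑ u) / N` cancels in `U i - U j`, leaving the error
`N⁻¹ (A i - A j)`. This is a signed sum of `2 (N - 1)` pairwise uncorrelated centred noises of
variance `σ²` (the rows `i` and `j` share no ordered pair), so its variance is
`2 (N - 1) σ² / N²`, and Chebyshev's inequality gives the bound.
-/

lemma variance_sum_of_covariance_eq_zero {Ω ι : Type*} [MeasurableSpace Ω] {μ : Measure Ω}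
    [IsFiniteMeasure μ] {X : ι → Ω → ℝ} {s : Finset ι} (hX : ∀ i ∈ s, MemLp (X i) 2 μ)
    (hcov : ∀ i ∈ s, ∀ j ∈ s, i ≠ j → cov[X i, X j; μ] = 0) :
    Var[∑ i ∈ s, X i; μ] = ∑ i ∈ s, Var[X i; μ] := by
  rw [variance_sum' hX]
  refine sum_congr rfl fun i hi ↦ ?_
  rw [sum_eq_single_of_mem i hi fun j hj hji ↦ hcov i hi j hj hji.symm,
    covariance_self (hX i hi).aemeasurable]

lemma potential_eq {ι : Type*} [Fintype ι] [DecidableEq ι] (u : ι → ℝ) (e : ι → ι → ℝ)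
    (a : ι) :
    1 / (Fintype.card ι : ℝ) * ∑ b ∈ univ \ {a}, (u a - u b + e a b)
      = u a - (∑ b, u b) / Fintype.card ι
        + (Fintype.card ι : ℝ)⁻¹ * ∑ b ∈ univ \ {a}, e a b := by
  have hcard : (Fintype.card ι : ℝ) ≠ 0 :=
    Nat.cast_ne_zero.mpr (Fintype.card_pos_iff.mpr ⟨a⟩).ne'
  have hdiff : ∑ b ∈ univ \ {a}, (u a - u b) = Fintype.card ι * u a - ∑ b, u b := by
    rw [sum_sdiff_eq_sub (subset_univ _), sum_singleton, sub_self, sub_zero, sum_sub_distrib,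
      sum_const, card_univ, nsmul_eq_mul]
  rw [sum_add_distrib, hdiff]
  field_simp

section RowSum

variable {Ω ι : Type*} [MeasurableSpace Ω] {μ : Measure Ω} {ε : ι → ι → Ω → ℝ} {σ : ℝ}
  {a c : ι} {t t' : Finset ι}

lemma memLp_rowSum (hL2 : ∀ a b, a ≠ b → MemLp (ε a b) 2 μ) (ht : a ∉ t) :
    MemLp (∑ b ∈ t, ε a b) 2 μ :=
  memLp_finsetSum' t fun b hb ↦ hL2 a b (ne_of_mem_of_not_mem hb ht).symm

lemma integral_rowSum [IsFiniteMeasure μ] (hL2 : ∀ a b, a ≠ b → MemLp (ε a b) 2 μ)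
    (hmean : ∀ a b, a ≠ b → μ[ε a b] = 0) (ht : a ∉ t) :
    μ[∑ b ∈ t, ε a b] = 0 := by
  simp only [Finset.sum_apply]
  rw [integral_finsetSum t fun b hb ↦
    (hL2 a b (ne_of_mem_of_not_mem hb ht).symm).integrable one_le_two]
  exact sum_eq_zero fun b hb ↦ hmean a b (ne_of_mem_of_not_mem hb ht).symm

variable (hL2 : ∀ a b, a ≠ b → MemLp (ε a b) 2 μ)
  (hcov : ∀ a b c d, a ≠ b → c ≠ d → (a, b) ≠ (c, d) → cov[ε a b, ε c d; μ] = 0)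
include hL2 hcov

lemma variance_rowSum [IsFiniteMeasure μ] (hvar : ∀ a b, a ≠ b → Var[ε a b; μ] = σ ^ 2)
    (ht : a ∉ t) :
    Var[∑ b ∈ t, ε a b; μ] = #t * σ ^ 2 := by
  have hne : ∀ b ∈ t, a ≠ b := fun b hb ↦ (ne_of_mem_of_not_mem hb ht).symm
  rw [variance_sum_of_covariance_eq_zero (fun b hb ↦ hL2 a b (hne b hb))
      fun b hb d hd hbd ↦ hcov a b a d (hne b hb) (hne d hd) (by simpa using hbd),
    sum_congr rfl fun b hb ↦ hvar a b (hne b hb), sum_const, nsmul_eq_mul]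

lemma covariance_rowSum_rowSum [IsFiniteMeasure μ] (hac : a ≠ c) (ht : a ∉ t) (ht' : c ∉ t') :
    cov[∑ b ∈ t, ε a b, ∑ d ∈ t', ε c d; μ] = 0 := by
  have hne : ∀ b ∈ t, a ≠ b := fun b hb ↦ (ne_of_mem_of_not_mem hb ht).symm
  have hne' : ∀ d ∈ t', c ≠ d := fun d hd ↦ (ne_of_mem_of_not_mem hd ht').symm
  rw [covariance_sum_sum' (fun b hb ↦ hL2 a b (hne b hb)) fun d hd ↦ hL2 c d (hne' d hd)]
  exact sum_eq_zero fun b hb ↦ sum_eq_zero fun d hd ↦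
    hcov a b c d (hne b hb) (hne' d hd) fun h ↦ hac (congrArg Prod.fst h)

lemma variance_rowSum_sub_rowSum [IsFiniteMeasure μ]
    (hvar : ∀ a b, a ≠ b → Var[ε a b; μ] = σ ^ 2) (hac : a ≠ c) (ht : a ∉ t) (ht' : c ∉ t') :
    Var[∑ b ∈ t, ε a b - ∑ d ∈ t', ε c d; μ] = (#t + #t') * σ ^ 2 := by
  rw [variance_sub (memLp_rowSum hL2 ht) (memLp_rowSum hL2 ht'),
    variance_rowSum hL2 hcov hvar ht, variance_rowSum hL2 hcov hvar ht',
    covariance_rowSum_rowSum hL2 hcov hac ht ht']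
  ring

lemma meas_ge_const_mul_rowSum_sub_rowSum_le [IsProbabilityMeasure μ]
    (hmean : ∀ a b, a ≠ b → μ[ε a b] = 0) (hvar : ∀ a b, a ≠ b → Var[ε a b; μ] = σ ^ 2)
    (hac : a ≠ c) (ht : a ∉ t) (ht' : c ∉ t') (k : ℝ) {δ : ℝ} (hδ : 0 < δ) :
    μ {ω | δ ≤ |k * (∑ b ∈ t, ε a b ω - ∑ d ∈ t', ε c d ω)|} ≤
      ENNReal.ofReal (k ^ 2 * ((#t + #t') * σ ^ 2) / δ ^ 2) := by
  let D := fun ω ↦ k * (∑ b ∈ t, ε a b - ∑ d ∈ t', ε c d) ω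
  have hD : MemLp D 2 μ := ((memLp_rowSum hL2 ht).sub (memLp_rowSum hL2 ht')).const_mul k
  have hD_mean : μ[D] = 0 := by
    simp only [D, Pi.sub_apply, integral_const_mul]
    rw [integral_sub ((memLp_rowSum hL2 ht).integrable one_le_two)
        ((memLp_rowSum hL2 ht').integrable one_le_two),
      integral_rowSum hL2 hmean ht, integral_rowSum hL2 hmean ht', sub_zero, mul_zero]
  have hbound := meas_ge_le_variance_div_sq hD hδ
  rw [hD_mean, variance_const_mul, variance_rowSum_sub_rowSum hL2 hcov hvar hac ht ht'] at hbound
  simpa only [D, sub_zero, Pi.sub_apply, Finset.sum_apply] using hbound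

end RowSum

lemma two_mul_pred_mul_div_le {n s d : ℝ} (hn : 0 < n) (hs : 0 ≤ s) (hd : 0 < d) :
    2 * (n - 1) * s / (n ^ 2 * d) ≤ 2 * s / (n * d) := by
  rw [div_le_div_iff₀ (by positivity) (by positivity)]
  nlinarith [mul_nonneg (mul_nonneg hs hn.le) hd.le]

theorem potential_method_preference_consistency_general
    {Ω : Type*} [MeasurableSpace Ω] (μ : Measure Ω) [IsProbabilityMeasure μ]
    (N : ℕ)
    (udag : Fin N → ℝ)
    (σ : ℝ)
    (ε : Fin N → Fin N → Ω → ℝ)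
    (hL2 : ∀ a b, a ≠ b → MemLp (ε a b) 2 μ)
    (hmean : ∀ a b, a ≠ b → ∫ ω, ε a b ω ∂μ = 0)
    (hvar : ∀ a b, a ≠ b → variance (ε a b) μ = σ ^ 2)
    (hcov : ∀ a b c d, a ≠ b → c ≠ d → (a, b) ≠ (c, d) →
      (∫ ω, ε a b ω * ε c d ω ∂μ) -
        (∫ ω, ε a b ω ∂μ) * (∫ ω, ε c d ω ∂μ) = 0)
    (ρ : Fin N → Fin N → Ω → ℝ)
    (hρ : ∀ a b, a ≠ b → ∀ ω, ρ a b ω = udag a - udag b + ε a b ω)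
    (U : Fin N → Ω → ℝ)
    (hU : ∀ a ω, U a ω = (1 / (N : ℝ)) * ∑ b ∈ univ \ {a}, ρ a b ω) :
    ∀ i j : Fin N, i ≠ j → ∀ δ : ℝ, 0 < δ →
      μ {ω | δ ≤ |U i ω - U j ω - (udag i - udag j)|} ≤
        ENNReal.ofReal (2 * ((N : ℝ) - 1) * σ ^ 2 / ((N : ℝ) ^ 2 * δ ^ 2)) ∧
      μ {ω | δ ≤ |U i ω - U j ω - (udag i - udag j)|} ≤
        ENNReal.ofReal (2 * σ ^ 2 / ((N : ℝ) * δ ^ 2)) := by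
  intro i j hij δ hδ
  have hN_pos : (0 : ℝ) < N := Nat.cast_pos.mpr i.pos
  have hcov' : ∀ a b c d, a ≠ b → c ≠ d → (a, b) ≠ (c, d) → cov[ε a b, ε c d; μ] = 0 :=
    fun a b c d hab hcd h ↦
      (covariance_eq_sub (hL2 a b hab) (hL2 c d hcd)).trans (hcov a b c d hab hcd h)
  have hnot : ∀ a : Fin N, a ∉ univ \ {a} := fun a ↦ by simp
  have hcard : ∀ a : Fin N, (#(univ \ {a}) : ℝ) = N - 1 := fun a ↦ by
    rw [card_univ_sdiff, Fintype.card_fin, card_singleton, Nat.cast_sub i.pos, Nat.cast_one]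
  have hU_eq : ∀ a ω, U a ω =
      udag a - (∑ b, udag b) / N + (N : ℝ)⁻¹ * ∑ b ∈ univ \ {a}, ε a b ω := fun a ω ↦ by
    rw [hU, sum_congr rfl fun b hb ↦ hρ a b (by simpa [eq_comm] using hb) ω]
    simpa using potential_eq udag (fun a b ↦ ε a b ω) a
  have hdev : ∀ ω, U i ω - U j ω - (udag i - udag j) =
      (N : ℝ)⁻¹ * (∑ b ∈ univ \ {i}, ε i b ω - ∑ b ∈ univ \ {j}, ε j b ω) := fun ω ↦ by
    rw [hU_eq, hU_eq]; ring
  have hvariance : (N : ℝ)⁻¹ ^ 2 * ((#(univ \ {i}) + #(univ \ {j})) * σ ^ 2) / δ ^ 2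
      = 2 * ((N : ℝ) - 1) * σ ^ 2 / ((N : ℝ) ^ 2 * δ ^ 2) := by
    rw [hcard, hcard]; field_simp; ring
  have hbound := meas_ge_const_mul_rowSum_sub_rowSum_le hL2 hcov' hmean hvar hij
    (hnot i) (hnot j) (N : ℝ)⁻¹ hδ
  simp only [← hdev, hvariance] at hbound
  exact ⟨hbound, hbound.trans (ENNReal.ofReal_le_ofReal
    (two_mul_pred_mul_div_le hN_pos (sq_nonneg σ) (by positivity)))⟩

/-- Chebyshev-type consistency bound for the potential-method preference
estimator: the deviation probability is bounded by `2(N-1)σ²/(N²δ²)`, and in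
particular by `2σ²/(Nδ²)`. -/
theorem potential_method_preference_consistency
    {Ω : Type*} [MeasurableSpace Ω] (μ : Measure Ω) [IsProbabilityMeasure μ]
    (N : ℕ) (hN : 2 ≤ N)
    (udag : Fin N → ℝ) (hu : ∑ k, udag k = 0)
    (σ : ℝ) (hσ : 0 ≤ σ)
    (ε : Fin N → Fin N → Ω → ℝ)
    (hL2 : ∀ a b, a ≠ b → MemLp (ε a b) 2 μ)
    (hmean : ∀ a b, a ≠ b → ∫ ω, ε a b ω ∂μ = 0)
    (hvar : ∀ a b, a ≠ b → variance (ε a b) μ = σ ^ 2)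
    (hcov : ∀ a b c d, a ≠ b → c ≠ d → (a, b) ≠ (c, d) →
      (∫ ω, ε a b ω * ε c d ω ∂μ) -
        (∫ ω, ε a b ω ∂μ) * (∫ ω, ε c d ω ∂μ) = 0)
    (ρ : Fin N → Fin N → Ω → ℝ)
    (hρ : ∀ a b, a ≠ b → ∀ ω, ρ a b ω = udag a - udag b + ε a b ω)
    (U : Fin N → Ω → ℝ)
    (hU : ∀ a ω, U a ω = (1 / (N : ℝ)) * ∑ b ∈ univ \ {a}, ρ a b ω) :
    ∀ i j : Fin N, i ≠ j → ∀ δ : ℝ, 0 < δ →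
      μ {ω | δ ≤ |U i ω - U j ω - (udag i - udag j)|} ≤
        ENNReal.ofReal (2 * ((N : ℝ) - 1) * σ ^ 2 / ((N : ℝ) ^ 2 * δ ^ 2)) ∧
      μ {ω | δ ≤ |U i ω - U j ω - (udag i - udag j)|} ≤
        ENNReal.ofReal (2 * σ ^ 2 / ((N : ℝ) * δ ^ 2)) :=
  potential_method_preference_consistency_general μ N udag σ ε hL2 hmean hvar hcov ρ hρ U hU
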